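/- arXiv:1412.7305 — 5 statements merged into one kernel-verified Lean document; each statement's English description precedes it below -/
import Mathlib

section
/- Let R be a commutative ring and let (A₁•, φ₁), (A₂•, φ₂), (A₃•, φ₃) be complexes of R-modules each equipped with an endomorphism φᵢ, together with a morphism of complexes ∪_A : A₁• ⊗ A₂• → A₃• satisfying ∪_A ∘ (φ₁ ⊗ φ₂) = φ₃ ∘ ∪_A. Then the map ∪_A^T : T•(A₁•) ⊗ T•(A₂•) → T•(A₃•) defined by (x_{n−1}, x_n) ∪_A^T (y_{m−1}, y_m) = (x_n ∪_A y_{m−1} + (−1)^m x_{n−1} ∪_A φ₂(y_m), x_n ∪_A y_m) is a morphism of complexes. -/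
/-- A cochain complex of `R`-modules indexed by `ℤ`. -/
structure Cx (R : Type) [CommRing R] where
  X : ℤ → Type
  [ab : ∀ n, AddCommGroup (X n)]
  [md : ∀ n, Module R (X n)]
  d : ∀ n, X n →ₗ[R] X (n + 1)
  dsq : ∀ n (x : X n), d (n + 1) (d n x) = 0

attribute [instance] Cx.ab Cx.md

/-- A morphism of complexes of `R`-modules. -/
structure Mor {R : Type} [CommRing R] (A B : Cx R) where
  f : ∀ n, A.X n →ₗ[R] B.X n
  comm : ∀ n (x : A.X n), B.d n (f n x) = f (n + 1) (A.d n x)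

/-- The differential of the total complex `T•(A•) = Tot(A• --(φ-1)--> A•)`.
Here `T^{n+1}(A) = Aⁿ ⊕ Aⁿ⁺¹` and
`d(a_{n}, a_{n+1}) = (d a_n + (-1)^{n+1} (φ-1) a_{n+1}, d a_{n+1})`. -/
def Td {R : Type} [CommRing R] (A : Cx R) (φ : Mor A A) (n : ℤ)
    (p : A.X n × A.X (n + 1)) : A.X (n + 1) × A.X (n + 1 + 1) :=
  (A.d n p.1 + (Int.negOnePow (n + 1) : ℤ) • (φ.f (n + 1) p.2 - p.2),
    A.d (n + 1) p.2)

/-- The map induced on total complexes by a morphism `α` (componentwise). -/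
def Tmor {R : Type} [CommRing R] {A B : Cx R} (α : Mor A B) (n : ℤ)
    (p : A.X n × A.X (n + 1)) : B.X n × B.X (n + 1) :=
  (α.f n p.1, α.f (n + 1) p.2)
/-- A morphism of complexes `A• ⊗ B• → C•`, given by its bilinear components
`Aⁿ ⊗ Bᵐ → Cⁿ⁺ᵐ` satisfying the Leibniz rule
`d(x ∪ y) = dx ∪ y + (-1)ⁿ x ∪ dy`. -/
structure Cup {R : Type} [CommRing R] (A B C : Cx R) where
  c : ∀ n m k, n + m = k → A.X n →ₗ[R] B.X m →ₗ[R] C.X k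
  leib : ∀ (n m k : ℤ) (hk : n + m = k) (x : A.X n) (y : B.X m),
    C.d k (c n m k hk x y)
      = c (n + 1) m (k + 1) (by omega) (A.d n x) y
        + (Int.negOnePow n : ℤ) • c n (m + 1) (k + 1) (by omega) x (B.d m y)

/-- The cup product `∪ᵀ : T•(A₁•) ⊗ T•(A₂•) → T•(A₃•)` induced by
`∪ : A₁• ⊗ A₂• → A₃•`:
`(x_{n}, x_{n+1}) ∪ᵀ (y_{m}, y_{m+1}) =
  (x_{n+1} ∪ y_m + (-1)^{m+1} x_n ∪ φ₂(y_{m+1}), x_{n+1} ∪ y_{m+1})`. -/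
def cupT {R : Type} [CommRing R] {A₁ A₂ A₃ : Cx R} (φ₂ : Mor A₂ A₂)
    (cup : Cup A₁ A₂ A₃) (n m k : ℤ) (hk : n + m = k)
    (p : A₁.X n × A₁.X (n + 1)) (q : A₂.X m × A₂.X (m + 1)) :
    A₃.X (k + 1) × A₃.X (k + 1 + 1) :=
  (cup.c (n + 1) m (k + 1) (by omega) p.2 q.1
      + (Int.negOnePow (m + 1) : ℤ) •
          cup.c n (m + 1) (k + 1) (by omega) p.1 (φ₂.f (m + 1) q.2),
    cup.c (n + 1) (m + 1) (k + 1 + 1) (by omega) p.2 q.2)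

set_option maxHeartbeats 1000000 in
/-- If `∪_A : A₁• ⊗ A₂• → A₃•` satisfies
`∪_A ∘ (φ₁ ⊗ φ₂) = φ₃ ∘ ∪_A`, then the induced map `∪ᵀ_A` on total complexes
is a morphism of complexes (Leibniz rule with respect to the total
differentials and the degree of the first factor). -/
theorem statement1 {R : Type} [CommRing R] (A₁ A₂ A₃ : Cx R)
    (φ₁ : Mor A₁ A₁) (φ₂ : Mor A₂ A₂) (φ₃ : Mor A₃ A₃)
    (cup : Cup A₁ A₂ A₃)
    (hcompat : ∀ (n m k : ℤ) (hk : n + m = k) (x : A₁.X n) (y : A₂.X m),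
      cup.c n m k hk (φ₁.f n x) (φ₂.f m y) = φ₃.f k (cup.c n m k hk x y)) :
    ∀ (n m k : ℤ) (hk : n + m = k)
      (p : A₁.X n × A₁.X (n + 1)) (q : A₂.X m × A₂.X (m + 1)),
      Td A₃ φ₃ (k + 1) (cupT φ₂ cup n m k hk p q)
        = cupT φ₂ cup (n + 1) m (k + 1) (by omega) (Td A₁ φ₁ n p) q
          + (Int.negOnePow (n + 1) : ℤ) •
              cupT φ₂ cup n (m + 1) (k + 1) (by omega) p (Td A₂ φ₂ m q) := by
  intro n m k hk p q
  subst hk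
  obtain ⟨x, x'⟩ := p
  obtain ⟨y, y'⟩ := q
  simp only [Td, cupT, Prod.mk_add_mk, Prod.smul_mk, Prod.mk.injEq]
  constructor
  · rw [map_add, map_zsmul, cup.leib, cup.leib, φ₂.comm, ← hcompat]
    simp only [Int.negOnePow_succ, Int.negOnePow_add, Int.negOnePow_one, map_add,
      map_sub, map_zsmul, LinearMap.add_apply, LinearMap.smul_apply, LinearMap.sub_apply,
      smul_add, smul_sub, smul_smul, Units.val_neg, Units.val_mul, neg_mul, mul_neg,
      neg_neg, neg_smul]
    rcases Int.even_or_odd n with hn | hn <;> rcases Int.even_or_odd m with hm | hm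
    · simp only [Int.negOnePow_even _ hn, Int.negOnePow_even _ hm, Int.negOnePow_one,
        Units.val_one, Units.val_neg, one_mul, mul_one, neg_mul, mul_neg, neg_neg,
        one_smul, neg_smul, Int.cast_one, Int.cast_neg, neg_one_mul, map_add,
        map_sub, map_neg, map_zsmul, LinearMap.add_apply, LinearMap.smul_apply,
        LinearMap.sub_apply, LinearMap.neg_apply, smul_add, smul_sub, smul_neg,
        smul_smul] <;> abel
    · simp only [Int.negOnePow_even _ hn, Int.negOnePow_odd _ hm, Int.negOnePow_one,
        Units.val_one, Units.val_neg, one_mul, mul_one, neg_mul, mul_neg, neg_neg,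
        one_smul, neg_smul, Int.cast_one, Int.cast_neg, neg_one_mul, map_add,
        map_sub, map_neg, map_zsmul, LinearMap.add_apply, LinearMap.smul_apply,
        LinearMap.sub_apply, LinearMap.neg_apply, smul_add, smul_sub, smul_neg,
        smul_smul] <;> abel
    · simp only [Int.negOnePow_odd _ hn, Int.negOnePow_even _ hm, Int.negOnePow_one,
        Units.val_one, Units.val_neg, one_mul, mul_one, neg_mul, mul_neg, neg_neg,
        one_smul, neg_smul, Int.cast_one, Int.cast_neg, neg_one_mul, map_add,
        map_sub, map_neg, map_zsmul, LinearMap.add_apply, LinearMap.smul_apply,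
        LinearMap.sub_apply, LinearMap.neg_apply, smul_add, smul_sub, smul_neg,
        smul_smul] <;> abel
    · simp only [Int.negOnePow_odd _ hn, Int.negOnePow_odd _ hm, Int.negOnePow_one,
        Units.val_one, Units.val_neg, one_mul, mul_one, neg_mul, mul_neg, neg_neg,
        one_smul, neg_smul, Int.cast_one, Int.cast_neg, neg_one_mul, map_add,
        map_sub, map_neg, map_zsmul, LinearMap.add_apply, LinearMap.smul_apply,
        LinearMap.sub_apply, LinearMap.neg_apply, smul_add, smul_sub, smul_neg,
        smul_smul] <;> abel
  · rw [cup.leib]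
end

section
/- Let (Aᵢ•, φᵢ), (Bᵢ•, ψᵢ) for i = 1,2,3 be complexes with endomorphisms satisfying the conditions making the cup products ∪_A : A₁• ⊗ A₂• → A₃• and ∪_B : B₁• ⊗ B₂• → B₃• compatible with the φᵢ and ψᵢ respectively. Let αᵢ : Aᵢ• → Bᵢ• be morphisms with αᵢ φᵢ = ψᵢ αᵢ, and let h : α₃ ∘ ∪_A ⇝ ∪_B ∘ (α₁ ⊗ α₂) be a homotopy satisfying h ∘ (φ₁ ⊗ φ₂) = ψ₃ ∘ h. Then the maps h_T^k defined by h_T((x_{n−1},x_n) ⊗ (y_{m−1},y_m)) = (h(x_n ⊗ y_{m−1}) + (−1)^m h(x_{n−1} ⊗ φ₂(y_m)), h(x_n ⊗ y_m)) give a homotopy α₃ ∘ ∪_A^T ⇝ ∪_B^T ∘ (α₁ ⊗ α₂) between morphisms T•(A₁•) ⊗ T•(A₂•) → T•(B₃•). -/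
/-- The map `h_T` on total complexes induced by a homotopy
`h : α₃ ∘ ∪_A ⇝ ∪_B ∘ (α₁ ⊗ α₂)`:
`h_T((x_n,x_{n+1}) ⊗ (y_m,y_{m+1})) =
  (h(x_{n+1} ⊗ y_m) + (-1)^{m+1} h(x_n ⊗ φ₂(y_{m+1})), h(x_{n+1} ⊗ y_{m+1}))`. -/
def hTot {R : Type} [CommRing R] {A₁ A₂ B₃ : Cx R} (φ₂ : Mor A₂ A₂)
    (h : ∀ n m k, n + m = k + 1 → A₁.X n →ₗ[R] A₂.X m →ₗ[R] B₃.X k)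
    (n m k : ℤ) (hk : n + m = k)
    (p : A₁.X n × A₁.X (n + 1)) (q : A₂.X m × A₂.X (m + 1)) :
    B₃.X k × B₃.X (k + 1) :=
  (h (n + 1) m k (by omega) p.2 q.1
      + (Int.negOnePow (m + 1) : ℤ) • h n (m + 1) k (by omega) p.1 (φ₂.f (m + 1) q.2),
    h (n + 1) (m + 1) (k + 1) (by omega) p.2 q.2)

/-- Given triples `(Aᵢ•, φᵢ)`, `(Bᵢ•, ψᵢ)` with compatible
cup products, morphisms `αᵢ : Aᵢ• → Bᵢ•` commuting with `φᵢ, ψᵢ`, and a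
homotopy `h : α₃ ∘ ∪_A ⇝ ∪_B ∘ (α₁ ⊗ α₂)` with `h ∘ (φ₁ ⊗ φ₂) = ψ₃ ∘ h`,
the maps `h_T` give a homotopy `α₃ ∘ ∪ᵀ_A ⇝ ∪ᵀ_B ∘ (α₁ ⊗ α₂)` on total
complexes. -/
theorem statement2 {R : Type} [CommRing R] (A₁ A₂ A₃ B₁ B₂ B₃ : Cx R)
    (φ₁ : Mor A₁ A₁) (φ₂ : Mor A₂ A₂) (φ₃ : Mor A₃ A₃)
    (ψ₁ : Mor B₁ B₁) (ψ₂ : Mor B₂ B₂) (ψ₃ : Mor B₃ B₃)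
    (cupA : Cup A₁ A₂ A₃) (cupB : Cup B₁ B₂ B₃)
    (hcupA : ∀ (n m k : ℤ) (hk : n + m = k) (x : A₁.X n) (y : A₂.X m),
      cupA.c n m k hk (φ₁.f n x) (φ₂.f m y) = φ₃.f k (cupA.c n m k hk x y))
    (hcupB : ∀ (n m k : ℤ) (hk : n + m = k) (x : B₁.X n) (y : B₂.X m),
      cupB.c n m k hk (ψ₁.f n x) (ψ₂.f m y) = ψ₃.f k (cupB.c n m k hk x y))
    (α₁ : Mor A₁ B₁) (α₂ : Mor A₂ B₂) (α₃ : Mor A₃ B₃)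
    (hα₁ : ∀ (n : ℤ) (x : A₁.X n), α₁.f n (φ₁.f n x) = ψ₁.f n (α₁.f n x))
    (hα₂ : ∀ (n : ℤ) (x : A₂.X n), α₂.f n (φ₂.f n x) = ψ₂.f n (α₂.f n x))
    (hα₃ : ∀ (n : ℤ) (x : A₃.X n), α₃.f n (φ₃.f n x) = ψ₃.f n (α₃.f n x))
    (h : ∀ n m k, n + m = k + 1 → A₁.X n →ₗ[R] A₂.X m →ₗ[R] B₃.X k)
    (hhom : ∀ (n m k : ℤ) (e : n + m = k + 1) (x : A₁.X n) (y : A₂.X m),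
      B₃.d k (h n m k e x y)
          + h (n + 1) m (k + 1) (by omega) (A₁.d n x) y
          + (Int.negOnePow n : ℤ) • h n (m + 1) (k + 1) (by omega) x (A₂.d m y)
        = cupB.c n m (k + 1) (by omega) (α₁.f n x) (α₂.f m y)
            - α₃.f (k + 1) (cupA.c n m (k + 1) (by omega) x y))
    (hφψ : ∀ (n m k : ℤ) (e : n + m = k + 1) (x : A₁.X n) (y : A₂.X m),
      h n m k e (φ₁.f n x) (φ₂.f m y) = ψ₃.f k (h n m k e x y)) :
    ∀ (n m k : ℤ) (hk : n + m = k)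
      (p : A₁.X n × A₁.X (n + 1)) (q : A₂.X m × A₂.X (m + 1)),
      Td B₃ ψ₃ k (hTot φ₂ h n m k hk p q)
          + hTot φ₂ h (n + 1) m (k + 1) (by omega) (Td A₁ φ₁ n p) q
          + (Int.negOnePow (n + 1) : ℤ) •
              hTot φ₂ h n (m + 1) (k + 1) (by omega) p (Td A₂ φ₂ m q)
        = cupT ψ₂ cupB n m k hk (Tmor α₁ n p) (Tmor α₂ m q)
            - Tmor α₃ (k + 1) (cupT φ₂ cupA n m k hk p q) := by
  
  intro n m k hk p q
  subst hk
  obtain ⟨x₀, x₁⟩ := p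
  obtain ⟨y₀, y₁⟩ := q
  have C2 : A₂.d (m + 1) (φ₂.f (m + 1) y₁) = φ₂.f (m + 1 + 1) (A₂.d (m + 1) y₁) :=
    φ₂.comm (m + 1) y₁
  have H1 := hhom (n + 1) m (n + m) (by omega) x₁ y₀
  have H2 := hhom n (m + 1) (n + m) (by omega) x₀ (φ₂.f (m + 1) y₁)
  have H3 := hhom (n + 1) (m + 1) (n + m + 1) (by omega) x₁ y₁
  have H4 := hφψ (n + 1) (m + 1) (n + m + 1) (by omega) x₁ y₁
  have H5 := hα₂ (m + 1) y₁
  simp only [Int.negOnePow_add, Int.negOnePow_one, Units.val_mul, Units.val_neg,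
    Units.val_one] at H1 H2 H3 H4
  simp only [Td, hTot, cupT, Tmor, Prod.mk_add_mk, Prod.smul_mk, Prod.mk_sub_mk,
    Prod.mk.injEq, map_add, map_sub, map_smul, map_zsmul, LinearMap.add_apply, LinearMap.sub_apply,
    LinearMap.smul_apply, Int.negOnePow_add, Int.negOnePow_one, Units.val_mul,
    Units.val_neg, Units.val_one, ← C2, ← H5]
  constructor
  · linear_combination (norm := module) H1
      + ((-(Int.negOnePow m : ℤ)) • H2)
      + (((Int.negOnePow n : ℤ) * (Int.negOnePow m : ℤ)) • H4)
  · linear_combination (norm := module) H3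
end

section
/- Let G be a profinite group topologically generated modulo a procyclic quotient by an element γ, acting continuously on topological modules D', D''. For continuous 1-cochains x ∈ C¹_γ(D') and y ∈ C¹_γ(D''), define the cochain c_{x,y} on the procyclic group ⟨γ⟩^∧ by c_{x,y}(γⁿ) = Σ_{i=0}^{n−1} γⁱ(x) ⊗ ((γⁿ − γ^{i+1})/(γ−1))(y) for n ≠ 0, 1 and c_{x,y}(1) = c_{x,y}(γ) = 0. Then d¹(c_{x,y}) = −α(x) ∪_c α(y), where α(x)(g) = ((γ^{κ(g)} − 1)/(γ − 1))(x) and ∪_c is the standard cup product on continuous cochains. -/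
open scoped TensorProduct BigOperators

/-- Let `γ` act on modules `D'` (here `M`) and `D''`
(here `N`), and on `M ⊗ N` diagonally.  For 1-cochains given by `x ∈ M`,
`y ∈ N`, define `c_{x,y}(γⁿ) = ∑_{i=0}^{n-1} γⁱ(x) ⊗ (∑_{j=i+1}^{n-1} γʲ)(y)`
(so `c_{x,y}(1) = c_{x,y}(γ) = 0`).  Then on the group generated by `γ`,
`d¹(c_{x,y}) = -α(x) ∪_c α(y)`, i.e. for all `n, m`:
`γⁿ c_{x,y}(γᵐ) - c_{x,y}(γⁿ⁺ᵐ) + c_{x,y}(γⁿ)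
   = -((∑_{i<n} γⁱ x) ⊗ γⁿ(∑_{j<m} γʲ y))`,
where `α(x)(γⁿ) = ((γⁿ-1)/(γ-1))(x) = ∑_{i<n} γⁱ x` and
`(x₁ ∪_c y₁)(g, g') = x₁(g) ⊗ g·y₁(g')`. -/
theorem statement11 (R M N : Type) [CommRing R]
    [AddCommGroup M] [Module R M] [AddCommGroup N] [Module R N]
    (γM : Module.End R M) (γN : Module.End R N) (x : M) (y : N) :
    ∀ n m : ℕ,
      TensorProduct.map (γM ^ n) (γN ^ n)
          (∑ i ∈ Finset.range m,
            (γM ^ i) x ⊗ₜ[R] (∑ j ∈ Finset.Ico (i + 1) m, (γN ^ j) y))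
        - (∑ i ∈ Finset.range (n + m),
            (γM ^ i) x ⊗ₜ[R] (∑ j ∈ Finset.Ico (i + 1) (n + m), (γN ^ j) y))
        + (∑ i ∈ Finset.range n,
            (γM ^ i) x ⊗ₜ[R] (∑ j ∈ Finset.Ico (i + 1) n, (γN ^ j) y))
        = -((∑ i ∈ Finset.range n, (γM ^ i) x) ⊗ₜ[R]
              (γN ^ n) (∑ j ∈ Finset.range m, (γN ^ j) y)) := by
  intro n m
  set f : ℕ → M ⊗[R] N := fun i =>
    (γM ^ i) x ⊗ₜ[R] (∑ j ∈ Finset.Ico (i + 1) (n + m), (γN ^ j) y) with hf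
  -- Term 1 equals the sum of f over Ico n (n+m)
  have h1 : TensorProduct.map (γM ^ n) (γN ^ n)
        (∑ i ∈ Finset.range m,
          (γM ^ i) x ⊗ₜ[R] (∑ j ∈ Finset.Ico (i + 1) m, (γN ^ j) y))
      = ∑ i ∈ Finset.Ico n (n + m), f i := by
    rw [map_sum, Finset.sum_Ico_eq_sum_range]
    simp only [Nat.add_sub_cancel_left, hf, TensorProduct.map_tmul, map_sum]
    refine Finset.sum_congr rfl fun i _ => ?_
    rw [← Module.End.mul_apply, ← pow_add]
    congr 1
    rw [Finset.sum_Ico_eq_sum_range, Finset.sum_Ico_eq_sum_range]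
    have : n + m - (n + i + 1) = m - (i + 1) := by omega
    rw [this]
    refine Finset.sum_congr rfl fun j _ => ?_
    rw [← Module.End.mul_apply, ← pow_add]
    congr 2
    omega
  -- Term 2 splits
  have h2 : (∑ i ∈ Finset.range (n + m),
        (γM ^ i) x ⊗ₜ[R] (∑ j ∈ Finset.Ico (i + 1) (n + m), (γN ^ j) y))
      = (∑ i ∈ Finset.range n, f i) + ∑ i ∈ Finset.Ico n (n + m), f i := by
    simp only [Finset.range_eq_Ico]
    exact (Finset.sum_Ico_consecutive f (Nat.zero_le n) (Nat.le_add_right n m)).symm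
  -- split f on range n
  have h3 : ∀ i ∈ Finset.range n, f i =
      (γM ^ i) x ⊗ₜ[R] (∑ j ∈ Finset.Ico (i + 1) n, (γN ^ j) y)
        + (γM ^ i) x ⊗ₜ[R] (∑ j ∈ Finset.Ico n (n + m), (γN ^ j) y) := by
    intro i hi
    rw [Finset.mem_range] at hi
    rw [hf, ← TensorProduct.tmul_add,
      Finset.sum_Ico_consecutive _ (by omega : i + 1 ≤ n) (Nat.le_add_right n m)]
  have h4 : (γN ^ n) (∑ j ∈ Finset.range m, (γN ^ j) y)
      = ∑ j ∈ Finset.Ico n (n + m), (γN ^ j) y := by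
    rw [map_sum, Finset.sum_Ico_eq_sum_range, Nat.add_sub_cancel_left]
    refine Finset.sum_congr rfl fun j _ => ?_
    rw [← Module.End.mul_apply, ← pow_add]
  rw [h1, h2, Finset.sum_congr rfl h3, Finset.sum_add_distrib, h4,
    TensorProduct.sum_tmul]
  abel
end

section
/- With c_{x,y} as above, for x ∈ C¹_γ(D') and y ∈ C⁰_γ(D'') one has c_{x,(γ−1)y} = α(x) ∪_c α(y) − α(x ∪_γ y), where x ∪_γ y = x ⊗ γ(y); and for x ∈ C⁰_γ(D'), y ∈ C¹_γ(D'') one has c_{(γ−1)x, y} = α(x ∪_γ y) − α(x) ∪_c α(y), where x ∪_γ y = x ⊗ y. -/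
open scoped TensorProduct BigOperators

private lemma tele {R N : Type} [CommRing R] [AddCommGroup N] [Module R N]
    (γ : Module.End R N) (y : N) (a n : ℕ) (h : a ≤ n) :
    ∑ j ∈ Finset.Ico a n, (γ ^ j) ((γ - 1) y) = (γ ^ n) y - (γ ^ a) y := by
  induction n, h using Nat.le_induction with
  | base => simp
  | succ n h ih =>
      rw [Finset.sum_Ico_succ_top h, ih]
      simp [pow_succ, LinearMap.sub_apply, map_sub]

/-- With `c_{x,y}(γⁿ) = ∑_{i<n} γⁱ(x) ⊗ (∑_{j=i+1}^{n-1} γʲ)(y)`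
as before, and `α` sending a 0-cochain to the constant cochain and a 1-cochain
`x` to `g ↦ ((γ^{κ(g)}-1)/(γ-1))(x)`:

(i) for a 1-cochain `x ∈ M = D'` and a 0-cochain `y ∈ N = D''`, with
`x ∪_γ y = x ⊗ γ(y)`:
`c_{x,(γ-1)y} = α(x) ∪_c α(y) - α(x ∪_γ y)`;

(ii) for a 0-cochain `x ∈ M` and a 1-cochain `y ∈ N`, with `x ∪_γ y = x ⊗ y`:
`c_{(γ-1)x,y} = α(x ∪_γ y) - α(x) ∪_c α(y)`. -/
theorem statement12 (R M N : Type) [CommRing R]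
    [AddCommGroup M] [Module R M] [AddCommGroup N] [Module R N]
    (γM : Module.End R M) (γN : Module.End R N) :
    -- (i)
    (∀ (x : M) (y : N) (n : ℕ),
      (∑ i ∈ Finset.range n,
          (γM ^ i) x ⊗ₜ[R] (∑ j ∈ Finset.Ico (i + 1) n, (γN ^ j) ((γN - 1) y)))
        = (∑ i ∈ Finset.range n, (γM ^ i) x) ⊗ₜ[R] (γN ^ n) y
            - ∑ i ∈ Finset.range n, (γM ^ i) x ⊗ₜ[R] (γN ^ (i + 1)) y)
    -- (ii)
    ∧ (∀ (x : M) (y : N) (n : ℕ),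
      (∑ i ∈ Finset.range n,
          (γM ^ i) ((γM - 1) x) ⊗ₜ[R] (∑ j ∈ Finset.Ico (i + 1) n, (γN ^ j) y))
        = (∑ i ∈ Finset.range n, (γM ^ i) x ⊗ₜ[R] (γN ^ i) y)
            - x ⊗ₜ[R] (∑ j ∈ Finset.range n, (γN ^ j) y)) := by
  constructor
  · intro x y n
    rw [Finset.sum_congr rfl (fun i hi => by
      rw [tele γN y (i + 1) n (Finset.mem_range.mp hi)])]
    simp only [TensorProduct.tmul_sub]
    rw [Finset.sum_sub_distrib, TensorProduct.sum_tmul]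
  · intro x y n
    induction n with
    | zero => simp
    | succ n ih =>
        rw [Finset.sum_range_succ, Finset.sum_range_succ (f := fun i =>
          (γM ^ i) x ⊗ₜ[R] (γN ^ i) y), Finset.sum_range_succ
          (f := fun j => (γN ^ j) y)]
        have empty : Finset.Ico (n + 1) (n + 1) = ∅ := by simp
        rw [empty, Finset.sum_empty, TensorProduct.tmul_zero, add_zero]
        rw [Finset.sum_congr rfl (fun i hi => by
          rw [Finset.sum_Ico_succ_top (Finset.mem_range.mp hi),
            TensorProduct.tmul_add])]
        rw [Finset.sum_add_distrib, ih, ← TensorProduct.sum_tmul]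
        have h0 : ∑ i ∈ Finset.range n, (γM ^ i) ((γM - 1) x)
            = (γM ^ n) x - x := by
          rw [← Nat.Ico_zero_eq_range, tele γM x 0 n (Nat.zero_le n)]
          simp
        rw [h0, TensorProduct.sub_tmul, TensorProduct.tmul_add]
        abel
end

section
/- Let D be a (φ, Γ_K)-module over the Robba ring with coefficients in a ring A, let γ be a topological generator of Γ_K⁰, and let C•_{φ,γ}(D) : 0 → D →^{d₀} D ⊕ D →^{d₁} D → 0 be the Fontaine–Herr complex with d₀(x) = ((φ−1)x, (γ−1)x) and d₁(x,y) = (γ−1)x − (φ−1)y. Let D̃ = D ⊗_A Ã_ι where Ã_ι = A[Γ⁰]^ι/J² and J is the augmentation ideal, with section s_D(x) = x ⊗ 1, and define the Bockstein map β_D(x) = (1/X̃)(d ∘ s_D − s_D ∘ d)(x) where X̃ = log⁻¹(χ(γ))(γ−1) mod J². Then for any x = (x_{n−1}, x_n) ∈ Cⁿ_{φ,γ}(D), β_D(x) = −(0, log χ(γ)) ∪_{φ,γ} x, i.e. β_D(x) = −log χ(γ) · (γ(x_{n−1}), γ(x_n)). -/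
/- We model the Fontaine–Herr complex `C•_{φ,γ}(D)` of a `(φ,Γ_K)`-module `D`
over `R_{K,A}` as the complex of an `A`-module `D` with commuting operators
`φ, γ`, namely `0 → D →(d₀) D ⊕ D →(d₁) D → 0` with
`d₀(x) = ((φ-1)x, (γ-1)x)` and `d₁(x,y) = (γ-1)x - (φ-1)y`.

The module `D̃ = D ⊗_A Ã_K^ι`, `Ã_K^ι = A[Γ⁰]^ι/J²`, is modelled as
`D ⊕ D·X̃` where `X̃ = log⁻¹(χ(γ))(γ - 1) mod J²`; writing `ℓ = log χ(γ)`,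
`φ` acts componentwise and `γ` acts by `γ̃(d₀, d₁) = (γd₀, γd₁ - ℓ•γd₀)`
(coming from `γ⁻¹ - 1 ≡ -X̃ log χ(γ) mod J²` on the ι-twisted module).
The section `s_D` is `x ↦ x ⊗ 1 = (x, 0)`. -/

/-- `φ` on `D̃ = D ⊕ D·X̃`. -/
def phiTil {A D : Type} [CommRing A] [AddCommGroup D] [Module A D]
    (φ : D →ₗ[A] D) (p : D × D) : D × D := (φ p.1, φ p.2)

/-- `γ` on `D̃ = D ⊕ D·X̃`, `ℓ = log χ(γ)`. -/
def gamTil {A D : Type} [CommRing A] [AddCommGroup D] [Module A D]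
    (γ : D →ₗ[A] D) (ℓ : A) (p : D × D) : D × D :=
  (γ p.1, γ p.2 - ℓ • γ p.1)

/-- The section `s_D : C⁰(D) → C⁰(D̃)`, `x ↦ (x, 0)`. -/
def sC0 {D : Type} [AddCommGroup D] (x : D) : D × D := (x, 0)

/-- The section `s_D : C¹(D) → C¹(D̃)` applied componentwise. -/
def sC1 {D : Type} [AddCommGroup D] (p : D × D) :
    (D × D) × (D × D) := ((p.1, 0), (p.2, 0))

/-- `d₀ : C⁰(D) → C¹(D)`. -/
def d0 {A D : Type} [CommRing A] [AddCommGroup D] [Module A D]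
    (φ γ : D →ₗ[A] D) (x : D) : D × D := (φ x - x, γ x - x)

/-- `d₁ : C¹(D) → C²(D)`. -/
def d1 {A D : Type} [CommRing A] [AddCommGroup D] [Module A D]
    (φ γ : D →ₗ[A] D) (p : D × D) : D := (γ p.1 - p.1) - (φ p.2 - p.2)

/-- `d₀ : C⁰(D̃) → C¹(D̃)`. -/
def d0Til {A D : Type} [CommRing A] [AddCommGroup D] [Module A D]
    (φ γ : D →ₗ[A] D) (ℓ : A) (p : D × D) : (D × D) × (D × D) :=
  (phiTil φ p - p, gamTil γ ℓ p - p)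

/-- `d₁ : C¹(D̃) → C²(D̃)`. -/
def d1Til {A D : Type} [CommRing A] [AddCommGroup D] [Module A D]
    (φ γ : D →ₗ[A] D) (ℓ : A) (q : (D × D) × (D × D)) : D × D :=
  (gamTil γ ℓ q.1 - q.1) - (phiTil φ q.2 - q.2)

/-- For the Bockstein map
`β_D(x) = (1/X̃)(d ∘ s_D - s_D ∘ d)(x)` of the Fontaine–Herr complex one has
`β_D(x) = -(0, log χ(γ)) ∪_{φ,γ} x`, i.e.
`β_D(x_{n-1}, x_n) = -log χ(γ) · (γ(x_{n-1}), γ(x_n))`.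
Concretely: `(d s_D - s_D d)(x)` has vanishing `D`-component, and its
`X̃`-component is `-ℓ·(γ x_{n-1}, γ x_n)`; in degree `0` (where `x_{-1} = 0`)
this reads `β_D(x) = (0, -ℓ γ x)`, and in degree `1` (where `x = (x₀, x₁)`
and `C²_{φ,γ} = C¹_γ`) it reads `β_D(x₀, x₁) = -ℓ γ(x₀)`. -/
theorem statement14 (A D : Type) [CommRing A] [AddCommGroup D] [Module A D]
    (φ γ : D →ₗ[A] D) (hcomm : ∀ x : D, φ (γ x) = γ (φ x)) (ℓ : A) :
    (∀ x : D,
      d0Til φ γ ℓ (sC0 x) - sC1 (d0 φ γ x)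
        = (((0 : D), (0 : D)), ((0 : D), -(ℓ • γ x))))
    ∧ (∀ p : D × D,
      d1Til φ γ ℓ (sC1 p) - sC0 (d1 φ γ p)
        = ((0 : D), -(ℓ • γ p.1))) := by
  constructor
  · intro x
    simp [d0Til, sC0, sC1, d0, phiTil, gamTil, Prod.ext_iff]
  · intro p
    simp [d1Til, sC0, sC1, d1, phiTil, gamTil, Prod.ext_iff]
end
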